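/- If H_{r-1} is a parity check matrix of a binary code with minimum distance at least 3, then every pair of distinct columns of the doubled matrix H_r = [[0…0|1…1],[H_{r-1}|H_{r-1}]] is linearly independent, i.e., the code defined by H_r has minimum distance at least 3. -/

import Mathlib

/-! A word `(a, b)` lies in the doubled code iff `b` has even weight and `a + b` lies in the
original code. If `a + b ≠ 0` then `3 ≤ |a + b| ≤ |a| + |b|`; otherwise `a = b ≠ 0` has positive
even weight, so `|a| + |b| ≥ 4`. Distinct columns are independent because a dependency between
them would be a nonzero codeword of weight at most 2. -/

/-- The doubling construction: `H_r = [[0…0 | 1…1], [H | H]]`. -/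
def doubling {r n : ℕ} (H : Matrix (Fin r) (Fin n) (ZMod 2)) :
    Matrix (Unit ⊕ Fin r) (Fin n ⊕ Fin n) (ZMod 2) :=
  Matrix.of fun i j =>
    match i, j with
    | Sum.inl _, Sum.inl _ => 0
    | Sum.inl _, Sum.inr _ => 1
    | Sum.inr i, Sum.inl j => H i j
    | Sum.inr i, Sum.inr j => H i j

open Matrix

section HammingNorm

variable {ι : Type*} [Fintype ι]

theorem hammingNorm_add_le {β : ι → Type*} [∀ i, AddZeroClass (β i)] [∀ i, DecidableEq (β i)]
    (x y : ∀ i, β i) : hammingNorm (x + y) ≤ hammingNorm x + hammingNorm y := by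
  classical
  refine (Finset.card_le_card fun i hi => ?_).trans (Finset.card_union_le _ _)
  simp only [Finset.mem_filter, Finset.mem_univ, true_and, Finset.mem_union] at hi ⊢
  by_contra! h
  exact hi (by simp [h.1, h.2])

theorem hammingNorm_single_le_one {γ : Type*} [Zero γ] [DecidableEq γ] [DecidableEq ι] (j : ι)
    (a : γ) : hammingNorm (Pi.single j a : ι → γ) ≤ 1 := by
  refine (Finset.card_le_card fun i hi => ?_).trans (Finset.card_singleton j).le
  simp only [Finset.mem_filter, Finset.mem_univ, true_and] at hi
  exact Finset.mem_singleton.2 (by_contra fun hij => hi (by simp [hij]))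

theorem hammingNorm_sum_type {κ γ : Type*} [Fintype κ] [Zero γ] [DecidableEq γ] (y : ι ⊕ κ → γ) :
    hammingNorm y = hammingNorm (y ∘ Sum.inl) + hammingNorm (y ∘ Sum.inr) := by
  simp only [hammingNorm, Finset.card_filter, Fintype.sum_sum_type, Function.comp_apply]

theorem natCast_hammingNorm_eq_sum (v : ι → ZMod 2) : (hammingNorm v : ZMod 2) = ∑ i, v i := by
  have h_one : ∀ a : ZMod 2, a ≠ 0 → a = 1 := by decide
  rw [hammingNorm, ← Finset.sum_filter_ne_zero Finset.univ,
    Finset.sum_congr rfl fun i hi => h_one _ (Finset.mem_filter.1 hi).2]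
  simp

theorem two_dvd_hammingNorm_of_sum_eq_zero {v : ι → ZMod 2} (hv : ∑ i, v i = 0) :
    2 ∣ hammingNorm v :=
  (ZMod.natCast_eq_zero_iff _ 2).1 (by rw [natCast_hammingNorm_eq_sum, hv])

end HammingNorm

theorem Matrix.linearIndependent_col_pair_of_three_le_hammingNorm {m ι R : Type*} [Fintype ι]
    [CommRing R] [DecidableEq R] (M : Matrix m ι R)
    (hM : ∀ y : ι → R, M *ᵥ y = 0 → y ≠ 0 → 3 ≤ hammingNorm y) {j k : ι} (hjk : j ≠ k) :
    LinearIndependent R ![fun i => M i j, fun i => M i k] := by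
  classical
  refine LinearIndependent.pair_iff.2 fun s t hst => ?_
  set y : ι → R := Pi.single j s + Pi.single k t
  have hMy : M *ᵥ y = 0 := by
    ext i
    simpa [y, mulVec_add, mul_comm] using congrFun hst i
  have hy : y = 0 := by
    by_contra hy
    have h_le_two : hammingNorm y ≤ 2 := (hammingNorm_add_le _ _).trans
      (add_le_add (hammingNorm_single_le_one j s) (hammingNorm_single_le_one k t))
    linarith [hM y hMy hy]
  exact ⟨by simpa [y, hjk.symm] using congrFun hy j, by simpa [y, hjk] using congrFun hy k⟩

section Doubling

variable {r n : ℕ} (H : Matrix (Fin r) (Fin n) (ZMod 2)) (y : Fin n ⊕ Fin n → ZMod 2)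

theorem doubling_mulVec_inl (u : Unit) : (doubling H *ᵥ y) (Sum.inl u) = ∑ j, y (Sum.inr j) := by
  simp [Matrix.mulVec, dotProduct, doubling, Fintype.sum_sum_type]

theorem doubling_mulVec_inr (i : Fin r) :
    (doubling H *ᵥ y) (Sum.inr i) = (H *ᵥ (y ∘ Sum.inl + y ∘ Sum.inr)) i := by
  simp [Matrix.mulVec, dotProduct, doubling, Fintype.sum_sum_type, mul_add, Finset.sum_add_distrib]

theorem three_le_hammingNorm_of_doubling_mulVec_eq_zero
    (hd : ∀ x : Fin n → ZMod 2, H *ᵥ x = 0 → x ≠ 0 → 3 ≤ hammingNorm x)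
    (hy : doubling H *ᵥ y = 0) (hy0 : y ≠ 0) : 3 ≤ hammingNorm y := by
  rw [hammingNorm_sum_type]
  set a := y ∘ Sum.inl
  set b := y ∘ Sum.inr
  have hb_even : 2 ∣ hammingNorm b :=
    two_dvd_hammingNorm_of_sum_eq_zero ((doubling_mulVec_inl H y ()).symm.trans (congrFun hy _))
  have hab : H *ᵥ (a + b) = 0 := funext fun i => by
    simpa [a, b] using (doubling_mulVec_inr H y i).symm.trans (congrFun hy (Sum.inr i))
  by_cases hab0 : a + b = 0
  · have hab_eq : a = b := funext fun j => CharTwo.add_eq_zero.1 (congrFun hab0 j)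
    have hb0 : b ≠ 0 := fun hb0 => hy0 <| funext fun
      | .inl j => congrFun (hab_eq.trans hb0) j
      | .inr j => congrFun hb0 j
    have hb_pos := hammingNorm_pos_iff.2 hb0
    rw [hab_eq]
    omega
  · linarith [hd _ hab hab0, hammingNorm_add_le a b]

end Doubling

/-- If the code with parity check matrix `H` has minimum distance ≥ 3, then the doubled
code has minimum distance ≥ 3, i.e. every pair of distinct columns of the doubled
matrix is linearly independent. -/
theorem stmt_2 {r n : ℕ} (H : Matrix (Fin r) (Fin n) (ZMod 2))
    (hd : ∀ x : Fin n → ZMod 2, Matrix.mulVec H x = 0 → x ≠ 0 → 3 ≤ hammingNorm x) :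
    (∀ y : Fin n ⊕ Fin n → ZMod 2,
        Matrix.mulVec (doubling H) y = 0 → y ≠ 0 → 3 ≤ hammingNorm y) ∧
    (∀ j k : Fin n ⊕ Fin n, j ≠ k →
      LinearIndependent (ZMod 2) ![fun i => doubling H i j, fun i => doubling H i k]) := by
  have h_doubled : ∀ y, doubling H *ᵥ y = 0 → y ≠ 0 → 3 ≤ hammingNorm y :=
    fun y => three_le_hammingNorm_of_doubling_mulVec_eq_zero H y hd
  exact ⟨h_doubled, fun _ _ => (doubling H).linearIndependent_col_pair_of_three_le_hammingNorm
    h_doubled⟩
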